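/- Let n, m be positive integers and x a real number (with all relevant denominators nonzero). Then Σ_{i=0}^{n} (-1)^i · C(n,i) · i · (x-i)_{-m} = (-1)^n · (x-n)_{-n-m} · (n+m-2)_{n-1} · n · (x+m), where (y)_{-k} := 1/((y+1)⋯(y+k)) and (a)_k is the falling factorial. -/

import Mathlib

/-- The falling factorial `(x)_m = x (x-1) ⋯ (x-m+1)`, with `(x)_0 = 1`. -/
def fall (x : ℝ) (m : ℕ) : ℝ := ∏ i ∈ Finset.range m, (x - i)

/-- The generalized falling factorial: for `n ≥ 0`, `(x)_n = x (x-1) ⋯ (x-n+1)`;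
for `n < 0`, `(x)_n = 1 / ((x+1)(x+2) ⋯ (x+(-n)))`. -/
noncomputable def gfall (x : ℝ) (n : ℤ) : ℝ :=
  if 0 ≤ n then ∏ i ∈ Finset.range n.toNat, (x - i)
  else (∏ i ∈ Finset.range (-n).toNat, (x + 1 + i))⁻¹

/-!
Write `F_m y = (y)_{-m}`. Its backward difference is `F_m (y - 1) - F_m y = m F_{m+1} (y - 1)`,
so iterating `n` times gives
`∑ (-1)^i C(n,i) F_m (x - i) = (-1)^n m (m+1) ⋯ (m+n-1) F_{m+n} (x - n)`.
The weight `i` is absorbed by `i C(n,i) = n C(n-1,i-1)`, which turns the sum into the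
`(n-1)`-st difference at `x - 1`, and finally `F_{m+n-1} (x - n) = (x + m) F_{m+n} (x - n)`.
-/

open Finset Function fwdDiff

lemma gfall_neg_natCast (y : ℝ) (k : ℕ) :
    gfall y (-(k : ℤ)) = (∏ i ∈ range k, (y + 1 + i))⁻¹ := by
  rcases k.eq_zero_or_pos with rfl | hk
  · simp [gfall]
  · rw [gfall, if_neg (by omega)]
    simp

lemma gfall_neg_succ (y : ℝ) (k : ℕ) :
    gfall y (-((k + 1 : ℕ) : ℤ)) = gfall y (-(k : ℤ)) * (y + 1 + k)⁻¹ := by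
  simp only [gfall_neg_natCast, prod_range_succ, mul_inv]

lemma gfall_sub_one_neg_succ (y : ℝ) (k : ℕ) :
    gfall (y - 1) (-((k + 1 : ℕ) : ℤ)) = y⁻¹ * gfall y (-(k : ℤ)) := by
  simp only [gfall_neg_natCast, prod_range_succ', mul_inv]
  push_cast
  ring_nf

lemma fwdDiff_gfall_neg {y : ℝ} (k : ℕ) (hy : y ≠ 0) (hyk : y + k ≠ 0) :
    Δ_[-1] (gfall · (-(k : ℤ))) y = k * gfall (y - 1) (-((k + 1 : ℕ) : ℤ)) := by
  have h₁ : gfall (y + -1) (-(k : ℤ)) = (y + k) * gfall (y - 1) (-((k + 1 : ℕ) : ℤ)) := by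
    rw [gfall_neg_succ, sub_add_cancel, mul_left_comm, mul_inv_cancel₀ hyk, mul_one,
      sub_eq_add_neg]
  have h₂ : gfall y (-(k : ℤ)) = y * gfall (y - 1) (-((k + 1 : ℕ) : ℤ)) := by
    rw [gfall_sub_one_neg_succ, mul_inv_cancel_left₀ hy]
  rw [fwdDiff, h₁, h₂]
  ring

lemma fall_add_one_succ (x : ℝ) (n : ℕ) : fall (x + 1) (n + 1) = (x + 1) * fall x n := by
  rw [fall, prod_range_succ', fall, mul_comm]
  push_cast
  simp only [sub_zero, add_sub_add_right_eq_sub]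

lemma fwdDiff_iter_gfall_neg (n k : ℕ) {y : ℝ}
    (hy : ∀ t : ℤ, 1 - (n : ℤ) ≤ t → t ≤ k → y + t ≠ 0) :
    (Δ_[-1])^[n] (gfall · (-(k : ℤ))) y =
      fall ((k : ℝ) + n - 1) n * gfall (y - n) (-((k + n : ℕ) : ℤ)) := by
  induction n generalizing y with
  | zero => simp [fall]
  | succ n ih =>
    have hy₀ : ∀ t : ℤ, 1 - (n : ℤ) ≤ t → t ≤ k → y + t ≠ 0 :=
      fun t h₁ h₂ => hy t (by omega) h₂
    have hy₁ : ∀ t : ℤ, 1 - (n : ℤ) ≤ t → t ≤ k → y + -1 + t ≠ 0 :=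
      fun t h₁ h₂ h => hy (t - 1) (by omega) (by omega) (by push_cast; linarith)
    have hΔ := fwdDiff_gfall_neg (y := y - n) (k + n)
      (fun h => hy (-n) (by omega) (by omega) (by push_cast; linarith))
      (fun h => hy k (by omega) le_rfl (by push_cast at h ⊢; linarith))
    rw [iterate_succ_apply', fwdDiff, ih hy₀, ih hy₁,
      show (k : ℝ) + (n + 1 : ℕ) - 1 = (k + n - 1) + 1 by push_cast; ring, fall_add_one_succ]
    rw [fwdDiff] at hΔ
    push_cast at hΔ ⊢
    rw [show y + -1 - n = y - n + -1 by ring, show y - (n + 1) = y - n - 1 by ring,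
      show -((k : ℤ) + (n + 1)) = -(k + n + 1) by ring]
    linear_combination fall ((k : ℝ) + n - 1) n * hΔ

lemma alternating_sum_choose_mul_sub_eq_fwdDiff_iter {R : Type*} [CommRing R] (f : R → R)
    (n : ℕ) (y : R) :
    ∑ i ∈ range (n + 1), (-1 : R) ^ i * n.choose i * f (y - i) =
      (-1) ^ n * (Δ_[-1])^[n] f y := by
  rw [fwdDiff_iter_eq_sum_shift, mul_sum]
  refine sum_congr rfl fun i hi => ?_
  obtain ⟨j, rfl⟩ := Nat.exists_eq_add_of_le (Nat.lt_succ_iff.mp (mem_range.mp hi))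
  rw [zsmul_eq_mul, nsmul_eq_mul, Nat.add_sub_cancel_left, pow_add]
  push_cast
  ring_nf
  simp

lemma alternating_sum_choose_mul_self_mul {R : Type*} [CommRing R] (f : ℕ → R) (n : ℕ) :
    ∑ i ∈ range (n + 2), (-1 : R) ^ i * (n + 1).choose i * i * f i =
      -(n + 1) * ∑ i ∈ range (n + 1), (-1 : R) ^ i * n.choose i * f (i + 1) := by
  rw [sum_range_succ', mul_sum]
  simp only [Nat.cast_zero, mul_zero, zero_mul, add_zero]
  refine sum_congr rfl fun i _ => ?_
  have h := congrArg (Nat.cast : ℕ → R) (Nat.add_one_mul_choose_eq n i)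
  push_cast at h ⊢
  linear_combination (-1 : R) ^ i * f (i + 1) * h

theorem stmt12_general (n m : ℕ) (x : ℝ)
    (hx : ∀ t : ℤ, 1 - (n : ℤ) ≤ t → t ≤ (m : ℤ) → x + t ≠ 0) :
    ∑ i ∈ Finset.range (n + 1), (-1 : ℝ) ^ i * (n.choose i) * i * gfall (x - i) (-(m : ℤ)) =
      (-1 : ℝ) ^ n * gfall (x - n) (-((n : ℤ) + m)) * fall ((n : ℝ) + m - 2) (n - 1) *
        n * (x + m) := by
  rcases n with _ | k
  · simp
  have hx₁ : ∀ t : ℤ, 1 - (k : ℤ) ≤ t → t ≤ m → x - 1 + t ≠ 0 :=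
    fun t h₁ h₂ h => hx (t - 1) (by omega) (by omega) (by push_cast; linarith)
  have hxm : x + m ≠ 0 := fun h => hx m (by omega) le_rfl (by exact_mod_cast h)
  have hshift : gfall (x - 1 - k) (-((m + k : ℕ) : ℤ)) =
      gfall (x - (k + 1 : ℕ)) (-((k + 1 : ℕ) + m : ℤ)) * (x + m) := by
    rw [show -(((k + 1 : ℕ) : ℤ) + m) = -((m + k + 1 : ℕ) : ℤ) by push_cast; ring,
      gfall_neg_succ, mul_assoc,
      show x - (k + 1 : ℕ) + 1 + (m + k : ℕ) = x + m by push_cast; ring,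
      inv_mul_cancel₀ hxm, mul_one, Nat.cast_succ, sub_add_eq_sub_sub_swap]
  have hsum := alternating_sum_choose_mul_self_mul (fun i => gfall (x - i) (-(m : ℤ))) k
  simp only [Nat.cast_add_one, ← sub_sub, sub_right_comm x _ 1] at hsum
  rw [hsum, alternating_sum_choose_mul_sub_eq_fwdDiff_iter (gfall · (-(m : ℤ))) k (x - 1),
    fwdDiff_iter_gfall_neg k m hx₁, hshift,
    show (k + 1 : ℕ) + (m : ℝ) - 2 = m + k - 1 by push_cast; ring, Nat.add_sub_cancel]
  push_cast
  ring

theorem stmt12 (n m : ℕ) (hn : 0 < n) (hm : 0 < m) (x : ℝ)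
    (hx : ∀ t : ℤ, 1 - (n : ℤ) ≤ t → t ≤ (m : ℤ) → x + t ≠ 0) :
    ∑ i ∈ Finset.range (n + 1), (-1 : ℝ) ^ i * (n.choose i) * i * gfall (x - i) (-(m : ℤ)) =
      (-1 : ℝ) ^ n * gfall (x - n) (-((n : ℤ) + m)) * fall ((n : ℝ) + m - 2) (n - 1) *
        n * (x + m) :=
  stmt12_general n m x hx
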